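/- arXiv:2410.04745 — 5 statements merged into one kernel-verified Lean document; each statement's English description precedes it below -/
import Mathlib

section
/- Let r > 0, λ ≥ 0, σx, σy > 0, ρ ∈ (−1,1), κx, κy ∈ ℝ, let f be a probability density on ℝ², and fix Δτ > 0. Then for every z ∈ ℝ² the Green's function g(z,Δτ) = (2π)⁻² ∫_{ℝ²} e^{i η·z} e^{Ψ(η)Δτ} dη admits the infinite series representation g(z,Δτ) = (2π √(det C))⁻¹ Σ_{k=0}^∞ g_k(z,Δτ), where g_k(z,Δτ) = ((λΔτ)^k / k!) ∫_{(ℝ²)^k} exp( θ − ½ (β + z + S_k)ᵀ C⁻¹ (β + z + S_k) ) ∏_{ℓ=1}^k f(s_ℓ) ds₁ ⋯ ds_k, with S_k = s₁ + ⋯ + s_k for k ≥ 1 and S₀ = (0,0) (so the k = 0 term is exp(θ − ½(β+z)ᵀC⁻¹(β+z))). -/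
open MeasureTheory Matrix
open scoped BigOperators

noncomputable section

/-- The diffusion covariance matrix `C̃`. -/
def covMat (σx σy ρ : ℝ) : Matrix (Fin 2) (Fin 2) ℝ :=
  !![σx ^ 2, ρ * σx * σy; ρ * σx * σy, σy ^ 2]

/-- The drift vector `β̃`. -/
def driftVec (r lam σx σy κx κy : ℝ) : Fin 2 → ℝ :=
  ![r - lam * κx - σx ^ 2 / 2, r - lam * κy - σy ^ 2 / 2]

/-- `Γ(η) = ∫ f(s) e^{i η·s} ds`. -/
def jumpSymbol (f : (Fin 2 → ℝ) → ℝ) (η : Fin 2 → ℝ) : ℂ :=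
  ∫ s : Fin 2 → ℝ, Complex.ofReal (f s) * Complex.exp (Complex.I * Complex.ofReal (η ⬝ᵥ s))

/-- The symbol `Ψ(η) = −½ ηᵀ C̃ η + i β̃·η − (r+λ) + λ Γ(η)`. -/
def symbolPsi (r lam σx σy ρ κx κy : ℝ) (f : (Fin 2 → ℝ) → ℝ) (η : Fin 2 → ℝ) : ℂ :=
  Complex.ofReal (-(1 / 2) * (η ⬝ᵥ (covMat σx σy ρ).mulVec η))
    + Complex.I * Complex.ofReal (driftVec r lam σx σy κx κy ⬝ᵥ η)
    - Complex.ofReal (r + lam) + Complex.ofReal lam * jumpSymbol f η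

/-- The Green's function `g(z, Δτ) = (2π)⁻² ∫ e^{i η·z} e^{Ψ(η)Δτ} dη`. -/
def greenFn (r lam σx σy ρ κx κy : ℝ) (f : (Fin 2 → ℝ) → ℝ) (Δτ : ℝ) (z : Fin 2 → ℝ) : ℂ :=
  Complex.ofReal (1 / (2 * Real.pi) ^ 2) *
    ∫ η : Fin 2 → ℝ,
      Complex.exp (Complex.I * Complex.ofReal (η ⬝ᵥ z)
        + symbolPsi r lam σx σy ρ κx κy f η * Complex.ofReal Δτ)

/-- The `k`-th term `g_k(z, Δτ)` of the infinite series, with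
`S_k = s₁ + ⋯ + s_k` (and `S₀ = 0`, so the `k = 0` term is
`exp(θ − ½(β+z)ᵀC⁻¹(β+z))`). -/
def seriesTerm (lam Δτ : ℝ) (C : Matrix (Fin 2) (Fin 2) ℝ) (β z : Fin 2 → ℝ) (θ : ℝ)
    (f : (Fin 2 → ℝ) → ℝ) (k : ℕ) : ℝ :=
  ((lam * Δτ) ^ k / (k.factorial : ℝ)) *
    ∫ s : Fin k → (Fin 2 → ℝ),
      Real.exp (θ - 1 / 2 * ((β + z + ∑ ℓ, s ℓ) ⬝ᵥ (C⁻¹).mulVec (β + z + ∑ ℓ, s ℓ))) *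
        ∏ ℓ, f (s ℓ)


section aux
open Complex Real

lemma shear_mp (t : ℝ) :
    MeasurePreserving (fun p : ℝ × ℝ => (p.1, p.2 + t * p.1))
      ((volume : Measure ℝ).prod volume) ((volume : Measure ℝ).prod volume) :=
  MeasurePreserving.skew_product (g := fun a y => y + t * a) (MeasurePreserving.id volume)
    (measurable_snd.add (measurable_fst.const_mul t))
    (Filter.Eventually.of_forall fun a => (measurePreserving_add_right volume (t * a)).map_eq)

lemma gauss_norm (q l : ℝ) :
    ‖Complex.exp ((q : ℂ) + Complex.I * (l : ℂ))‖ = Real.exp q := by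
  rw [Complex.norm_exp]
  simp

lemma gauss_integrable (a b c : ℝ) (hc : 0 < c) (hD : 0 < a * c - b ^ 2) (w₀ w₁ : ℝ) :
    Integrable (fun p : ℝ × ℝ => Complex.exp
      (((-(1/2) * (a * p.1 ^ 2 + 2 * b * p.1 * p.2 + c * p.2 ^ 2) : ℝ) : ℂ)
        + Complex.I * ((p.1 * w₀ + p.2 * w₁ : ℝ) : ℂ))) := by
  have hcont : Continuous (fun p : ℝ × ℝ => Complex.exp
      (((-(1/2) * (a * p.1 ^ 2 + 2 * b * p.1 * p.2 + c * p.2 ^ 2) : ℝ) : ℂ)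
        + Complex.I * ((p.1 * w₀ + p.2 * w₁ : ℝ) : ℂ))) := by fun_prop
  have hG : Integrable (fun p : ℝ × ℝ =>
      Real.exp (-((a * c - b ^ 2)/(2*c)) * p.1 ^ 2) * Real.exp (-(c/2) * p.2 ^ 2))
      ((volume : Measure ℝ).prod volume) :=
    Integrable.mul_prod (integrable_exp_neg_mul_sq (by positivity))
      (integrable_exp_neg_mul_sq (by positivity))
  have hGS : Integrable ((fun p : ℝ × ℝ =>
      Real.exp (-((a * c - b ^ 2)/(2*c)) * p.1 ^ 2) * Real.exp (-(c/2) * p.2 ^ 2)) ∘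
      (fun p : ℝ × ℝ => (p.1, p.2 + (b/c) * p.1))) ((volume : Measure ℝ).prod volume) :=
    ((shear_mp (b/c)).integrable_comp hG.aestronglyMeasurable).2 hG
  rw [← Measure.volume_eq_prod] at hGS
  refine hGS.mono' hcont.aestronglyMeasurable (Filter.Eventually.of_forall fun p => ?_)
  rw [gauss_norm]
  have hc0 : c ≠ 0 := hc.ne'
  have : -(1/2) * (a * p.1 ^ 2 + 2 * b * p.1 * p.2 + c * p.2 ^ 2)
      = -((a * c - b ^ 2)/(2*c)) * p.1 ^ 2 + (-(c/2) * (p.2 + b/c * p.1) ^ 2) := by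
    field_simp
    ring
  rw [this, Real.exp_add]
  simp [Function.comp]

lemma gauss_integral (a b c : ℝ) (hc : 0 < c) (hD : 0 < a * c - b ^ 2) (w₀ w₁ : ℝ) :
    ∫ p : ℝ × ℝ, Complex.exp
      (((-(1/2) * (a * p.1 ^ 2 + 2 * b * p.1 * p.2 + c * p.2 ^ 2) : ℝ) : ℂ)
        + Complex.I * ((p.1 * w₀ + p.2 * w₁ : ℝ) : ℂ))
    = ((2 * Real.pi / Real.sqrt (a * c - b ^ 2) : ℝ) : ℂ) *
      Complex.exp (((-(1/2) * ((c * w₀ ^ 2 - 2 * b * w₀ * w₁ + a * w₁ ^ 2)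
        / (a * c - b ^ 2)) : ℝ) : ℂ)) := by
  have ha : 0 < a := by nlinarith [sq_nonneg b]
  have hc0 : (c : ℂ) ≠ 0 := Complex.ofReal_ne_zero.2 hc.ne'
  have hD0 : ((a * c - b ^ 2 : ℝ) : ℂ) ≠ 0 := Complex.ofReal_ne_zero.2 hD.ne'
  have hInt := gauss_integrable a b c hc hD w₀ w₁
  rw [Measure.volume_eq_prod] at hInt
  rw [Measure.volume_eq_prod, integral_prod _ hInt]
  have hb1 : (-(c : ℂ) / 2).re < 0 := by
    simp only [neg_div, Complex.neg_re, Complex.div_re]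
    norm_num
    positivity
  have step1 : ∀ x : ℝ, (∫ y : ℝ, Complex.exp
      (((-(1/2) * (a * x ^ 2 + 2 * b * x * y + c * y ^ 2) : ℝ) : ℂ)
        + Complex.I * ((x * w₀ + y * w₁ : ℝ) : ℂ)))
      = ((Real.pi : ℂ) / ((c : ℂ)/2)) ^ (1/2 : ℂ) *
        Complex.exp ((-(((a * c - b ^ 2 : ℝ) : ℂ))/(2 * (c:ℂ))) * (x:ℂ) ^ 2
          + Complex.I * ((w₀ : ℂ) - (b:ℂ) * (w₁:ℂ)/(c:ℂ)) * (x:ℂ)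
          + (-(w₁:ℂ) ^ 2/(2 * (c:ℂ)))) := by
    intro x
    have hexp : ∀ y : ℝ, (((-(1/2) * (a * x ^ 2 + 2 * b * x * y + c * y ^ 2) : ℝ) : ℂ)
        + Complex.I * ((x * w₀ + y * w₁ : ℝ) : ℂ))
        = (-(c:ℂ)/2) * (y:ℂ) ^ 2 + (Complex.I * (w₁:ℂ) - (b:ℂ) * (x:ℂ)) * (y:ℂ)
          + (Complex.I * (w₀:ℂ) * (x:ℂ) - (a:ℂ)/2 * (x:ℂ) ^ 2) := by
      intro y; push_cast; ring
    simp_rw [hexp]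
    rw [integral_cexp_quadratic hb1]
    congr 1
    · congr 1
      rw [neg_div, neg_neg]
    · congr 1
      field_simp
      ring_nf
      simp only [Complex.I_sq]
      push_cast
      ring
  simp_rw [step1, integral_const_mul]
  have hb2 : ((-(((a * c - b ^ 2 : ℝ) : ℂ))/(2 * (c:ℂ)))).re < 0 := by
    have : (-(((a * c - b ^ 2 : ℝ) : ℂ))/(2 * (c:ℂ))) = ((-((a*c-b^2)/(2*c)) : ℝ) : ℂ) := by
      push_cast; ring
    rw [this, Complex.ofReal_re]
    have : 0 < (a * c - b ^ 2) / (2 * c) := by positivity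
    linarith
  rw [integral_cexp_quadratic hb2]
  have hexp2 : (-(w₁:ℂ) ^ 2/(2 * (c:ℂ)) -
      (Complex.I * ((w₀ : ℂ) - (b:ℂ) * (w₁:ℂ)/(c:ℂ))) ^ 2 /
        (4 * (-(((a * c - b ^ 2 : ℝ) : ℂ))/(2 * (c:ℂ)))))
      = (((-(1/2) * ((c * w₀ ^ 2 - 2 * b * w₀ * w₁ + a * w₁ ^ 2)
        / (a * c - b ^ 2)) : ℝ) : ℂ)) := by
    push_cast
    have hD0' : ((a : ℂ) * c - b ^ 2) ≠ 0 := by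
      have := hD0; push_cast at this; exact this
    have h4 : ((c:ℂ) ^ 2 * (b:ℂ) ^ 2 * 4 - (c:ℂ) ^ 3 * (a:ℂ) * 4) ≠ 0 := by
      have h5 : ((c:ℂ) ^ 2 * (b:ℂ) ^ 2 * 4 - (c:ℂ) ^ 3 * (a:ℂ) * 4)
          = -4 * (c:ℂ) ^ 2 * ((a:ℂ) * (c:ℂ) - (b:ℂ) ^ 2) := by ring
      rw [h5]
      exact mul_ne_zero (mul_ne_zero (by norm_num) (pow_ne_zero 2 hc0)) hD0'
    field_simp
    ring_nf
    simp only [Complex.I_sq]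
    field_simp [h4]
    have hX : (c:ℂ) * a - b ^ 2 ≠ 0 := by rw [mul_comm]; exact hD0'
    linear_combination (4 * (w₁:ℂ) ^ 2) * (mul_inv_cancel₀ hX)
  rw [hexp2, ← mul_assoc]
  congr 1
  have e1 : ((Real.pi : ℂ) / ((c : ℂ)/2)) = ((2 * Real.pi / c : ℝ) : ℂ) := by
    push_cast; field_simp
  have e2 : ((Real.pi : ℂ) / -(-(((a * c - b ^ 2 : ℝ) : ℂ))/(2 * (c:ℂ))))
      = ((2 * Real.pi * c / (a * c - b ^ 2) : ℝ) : ℂ) := by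
    push_cast
    rw [neg_div, neg_neg]
    field_simp
  rw [e1, e2]
  have h12 : (1/2 : ℂ) = ((1/2 : ℝ) : ℂ) := by norm_num
  rw [h12, ← Complex.ofReal_cpow (by positivity), ← Complex.ofReal_cpow (by positivity),
    ← Complex.ofReal_mul]
  congr 1
  rw [← Real.mul_rpow (by positivity) (by positivity), ← Real.sqrt_eq_rpow]
  have : 2 * Real.pi / c * (2 * Real.pi * c / (a * c - b ^ 2))
      = (2 * Real.pi / Real.sqrt (a * c - b ^ 2)) ^ 2 := by
    rw [div_pow, mul_pow, Real.sq_sqrt hD.le]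
    field_simp
  rw [this, Real.sqrt_sq (by positivity)]

lemma gauss_integral_pi (a b c : ℝ) (hc : 0 < c) (hD : 0 < a * c - b ^ 2) (w : Fin 2 → ℝ) :
    ∫ η : Fin 2 → ℝ, Complex.exp
      (((-(1/2) * (a * η 0 ^ 2 + 2 * b * η 0 * η 1 + c * η 1 ^ 2) : ℝ) : ℂ)
        + Complex.I * ((η 0 * w 0 + η 1 * w 1 : ℝ) : ℂ))
    = ((2 * Real.pi / Real.sqrt (a * c - b ^ 2) : ℝ) : ℂ) *
      Complex.exp (((-(1/2) * ((c * (w 0) ^ 2 - 2 * b * (w 0) * (w 1) + a * (w 1) ^ 2)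
        / (a * c - b ^ 2)) : ℝ) : ℂ)) := by
  rw [← MeasurePreserving.integral_comp'
    (MeasurePreserving.symm _ (volume_preserving_finTwoArrow ℝ))
    (f := (MeasurableEquiv.finTwoArrow : (Fin 2 → ℝ) ≃ᵐ ℝ × ℝ).symm)]
  have : ∀ p : ℝ × ℝ, (MeasurableEquiv.finTwoArrow.symm p : Fin 2 → ℝ) 0 = p.1 ∧
      (MeasurableEquiv.finTwoArrow.symm p : Fin 2 → ℝ) 1 = p.2 := by
    intro p
    constructor <;> simp [MeasurableEquiv.finTwoArrow]
  simp_rw [(this _).1, (this _).2]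
  exact gauss_integral a b c hc hD (w 0) (w 1)

lemma gauss_integrable_pi (a b c : ℝ) (hc : 0 < c) (hD : 0 < a * c - b ^ 2) (w : Fin 2 → ℝ) :
    Integrable (fun η : Fin 2 → ℝ => Complex.exp
      (((-(1/2) * (a * η 0 ^ 2 + 2 * b * η 0 * η 1 + c * η 1 ^ 2) : ℝ) : ℂ)
        + Complex.I * ((η 0 * w 0 + η 1 * w 1 : ℝ) : ℂ))) := by
  have h := gauss_integrable a b c hc hD (w 0) (w 1)
  rw [Measure.volume_eq_prod] at h
  have h2 := ((volume_preserving_finTwoArrow ℝ).integrable_comp_emb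
    (MeasurableEquiv.measurableEmbedding _)).2 h
  refine h2.congr (Filter.Eventually.of_forall fun η => ?_)
  simp [MeasurableEquiv.finTwoArrow, Function.comp]

/-- `Γ(η) = ∫ f(s) e^{i η·s} ds`. -/
def jumpSymbol' (f : (Fin 2 → ℝ) → ℝ) (η : Fin 2 → ℝ) : ℂ :=
  ∫ s : Fin 2 → ℝ, Complex.ofReal (f s) * Complex.exp (Complex.I * Complex.ofReal (η ⬝ᵥ s))

lemma dot_measurable : Measurable (fun q : (Fin 2 → ℝ) × (Fin 2 → ℝ) => q.1 ⬝ᵥ q.2) := by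
  simp only [dotProduct]
  exact Finset.measurable_sum _ fun i _ =>
    ((measurable_pi_apply i).comp measurable_fst).mul ((measurable_pi_apply i).comp measurable_snd)

lemma jump_meas (f : (Fin 2 → ℝ) → ℝ) (hf_meas : Measurable f) :
    StronglyMeasurable (jumpSymbol' f) := by
  apply MeasureTheory.StronglyMeasurable.integral_prod_right'
    (f := fun q : (Fin 2 → ℝ) × (Fin 2 → ℝ) =>
      (Complex.ofReal (f q.2) * Complex.exp (Complex.I * Complex.ofReal (q.1 ⬝ᵥ q.2)) : ℂ))
  apply Measurable.stronglyMeasurable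
  exact (Complex.measurable_ofReal.comp (hf_meas.comp measurable_snd)).mul
    (Complex.measurable_exp.comp
      (measurable_const.mul (Complex.measurable_ofReal.comp dot_measurable)))

lemma jump_norm_le (f : (Fin 2 → ℝ) → ℝ) (hnn : ∀ s, 0 ≤ f s)
    (hp : ∫ s : Fin 2 → ℝ, f s = 1) (η : Fin 2 → ℝ) : ‖jumpSymbol' f η‖ ≤ 1 := by
  unfold jumpSymbol'
  calc ‖∫ s : Fin 2 → ℝ, Complex.ofReal (f s) * Complex.exp (Complex.I * Complex.ofReal (η ⬝ᵥ s))‖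
      ≤ ∫ s : Fin 2 → ℝ, ‖Complex.ofReal (f s) * Complex.exp (Complex.I * Complex.ofReal (η ⬝ᵥ s))‖ :=
        norm_integral_le_integral_norm _
    _ = ∫ s : Fin 2 → ℝ, f s := by
        apply integral_congr_ae
        filter_upwards with s
        rw [norm_mul]
        simp [Complex.norm_exp, _root_.abs_of_nonneg (hnn s)]
    _ = 1 := hp

lemma series_step (G : (Fin 2 → ℝ) → ℂ) (hGint : Integrable G) (Γ : (Fin 2 → ℝ) → ℂ)
    (hΓm : AEStronglyMeasurable Γ (volume : Measure (Fin 2 → ℝ)))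
    (hΓ1 : ∀ η, ‖Γ η‖ ≤ 1) (c₁ : ℝ) (hc₁ : 0 ≤ c₁) :
    ∫ η : Fin 2 → ℝ, ∑' k : ℕ, G η * ((c₁ : ℂ) * Γ η) ^ k / (k.factorial : ℂ)
      = ∑' k : ℕ, ∫ η : Fin 2 → ℝ, G η * ((c₁ : ℂ) * Γ η) ^ k / (k.factorial : ℂ) := by
  have hmeas : ∀ k : ℕ, AEStronglyMeasurable
      (fun η : Fin 2 → ℝ => G η * ((c₁ : ℂ) * Γ η) ^ k / (k.factorial : ℂ)) volume := by
    intro k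
    simp only [div_eq_mul_inv]
    exact (hGint.aestronglyMeasurable.mul ((hΓm.const_mul _).pow k)).mul aestronglyMeasurable_const
  apply integral_tsum hmeas
  have hK : (∫⁻ η : Fin 2 → ℝ, ‖G η‖₊) ≠ ⊤ := hGint.2.ne
  have hTb : ∀ k : ℕ, (∫⁻ η : Fin 2 → ℝ, ‖G η * ((c₁ : ℂ) * Γ η) ^ k / (k.factorial : ℂ)‖₊)
      ≤ ENNReal.ofReal (c₁ ^ k / k.factorial) * ∫⁻ η : Fin 2 → ℝ, ‖G η‖₊ := by
    intro k
    rw [← MeasureTheory.lintegral_const_mul' _ _ ENNReal.ofReal_ne_top]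
    apply lintegral_mono
    intro η
    simp only
    rw [← enorm_eq_nnnorm, ← enorm_eq_nnnorm, ← ofReal_norm, ← ofReal_norm,
      ← ENNReal.ofReal_mul (by positivity)]
    apply ENNReal.ofReal_le_ofReal
    rw [norm_div, norm_mul, norm_pow, norm_mul]
    have h1 : ‖(c₁ : ℂ)‖ * ‖Γ η‖ ≤ c₁ := by
      rw [Complex.norm_real, Real.norm_of_nonneg hc₁]
      calc c₁ * ‖Γ η‖ ≤ c₁ * 1 := by gcongr; exact hΓ1 η
        _ = c₁ := mul_one c₁
    have h2 : ‖((k.factorial : ℕ) : ℂ)‖ = (k.factorial : ℝ) := by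
      simp
    rw [h2]
    calc ‖G η‖ * (‖(c₁:ℂ)‖ * ‖Γ η‖) ^ k / (k.factorial : ℝ)
        ≤ ‖G η‖ * c₁ ^ k / (k.factorial : ℝ) := by
          gcongr
        _ = c₁ ^ k / (k.factorial : ℝ) * ‖G η‖ := by ring
  refine LT.lt.ne ?_
  calc ∑' k : ℕ, ∫⁻ η : Fin 2 → ℝ, ‖G η * ((c₁ : ℂ) * Γ η) ^ k / (k.factorial : ℂ)‖₊
      ≤ ∑' k : ℕ, ENNReal.ofReal (c₁ ^ k / k.factorial) * ∫⁻ η : Fin 2 → ℝ, ‖G η‖₊ :=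
        ENNReal.tsum_le_tsum hTb
    _ = (∑' k : ℕ, ENNReal.ofReal (c₁ ^ k / k.factorial)) * ∫⁻ η : Fin 2 → ℝ, ‖G η‖₊ :=
        ENNReal.tsum_mul_right
    _ < ⊤ := by
        apply ENNReal.mul_lt_top _ hK.lt_top
        rw [← ENNReal.ofReal_tsum_of_nonneg (fun k => by positivity)
          (Real.summable_pow_div_factorial c₁)]
        exact ENNReal.ofReal_lt_top

lemma integral_ofReal'' {α : Type*} [MeasurableSpace α] {μ : Measure α} (f : α → ℝ) :
    ∫ x, ((f x : ℝ) : ℂ) ∂μ = ((∫ x, f x ∂μ : ℝ) : ℂ) := integral_ofReal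

def Gfun (A B Cc : ℝ) (w : Fin 2 → ℝ) : (Fin 2 → ℝ) → ℂ := fun η =>
  Complex.exp (((-(1/2) * (A * η 0 ^ 2 + 2 * B * η 0 * η 1 + Cc * η 1 ^ 2) : ℝ) : ℂ)
    + Complex.I * ((η 0 * w 0 + η 1 * w 1 : ℝ) : ℂ))

lemma dot_sum_eq (η : Fin 2 → ℝ) {k : ℕ} (s : Fin k → Fin 2 → ℝ) :
    η ⬝ᵥ (∑ ℓ, s ℓ) = ∑ ℓ, η ⬝ᵥ s ℓ := by
  simp only [dotProduct, Finset.sum_apply, Finset.mul_sum]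
  rw [Finset.sum_comm]

lemma term_eval (A B Cc θ : ℝ) (hC : 0 < Cc) (hD : 0 < A * Cc - B ^ 2)
    (f : (Fin 2 → ℝ) → ℝ) (hf_meas : Measurable f) (hf_nonneg : ∀ s, 0 ≤ f s)
    (hf_int : Integrable f) (w : Fin 2 → ℝ) (c₁ : ℝ) (k : ℕ) :
    ∫ η : Fin 2 → ℝ, ((Real.exp θ : ℝ) : ℂ) * Gfun A B Cc w η *
        ((c₁ : ℂ) * jumpSymbol' f η) ^ k / (k.factorial : ℂ)
    = ((2 * Real.pi / Real.sqrt (A * Cc - B ^ 2) : ℝ) : ℂ) *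
      ((c₁ ^ k / (k.factorial : ℝ)) *
        ∫ s : Fin k → (Fin 2 → ℝ),
          Real.exp (θ - 1/2 * ((Cc * (w 0 + (∑ ℓ, s ℓ) 0) ^ 2
              - 2 * B * (w 0 + (∑ ℓ, s ℓ) 0) * (w 1 + (∑ ℓ, s ℓ) 1)
              + A * (w 1 + (∑ ℓ, s ℓ) 1) ^ 2) / (A * Cc - B ^ 2))) * ∏ ℓ, f (s ℓ) : ℝ) := by
  have hGint : Integrable (Gfun A B Cc w) := gauss_integrable_pi A B Cc hC hD w
  -- Step 1: pull out constants
  have step1 : ∀ η : Fin 2 → ℝ,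
      ((Real.exp θ : ℝ) : ℂ) * Gfun A B Cc w η * ((c₁ : ℂ) * jumpSymbol' f η) ^ k / (k.factorial : ℂ)
      = (((Real.exp θ * c₁ ^ k : ℝ) : ℂ) / (k.factorial : ℂ)) *
          (Gfun A B Cc w η * (jumpSymbol' f η) ^ k) := by
    intro η
    push_cast
    ring
  simp_rw [step1, integral_const_mul]
  -- Step 2: Γ^k as an integral over (Fin k → ℝ²)
  have step2 : ∀ η : Fin 2 → ℝ, (jumpSymbol' f η) ^ k
      = ∫ s : Fin k → (Fin 2 → ℝ), ((∏ ℓ, f (s ℓ) : ℝ) : ℂ)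
          * Complex.exp (Complex.I * ((η ⬝ᵥ (∑ ℓ, s ℓ) : ℝ) : ℂ)) := by
    intro η
    have := integral_fintype_prod_eq_pow (ι := Fin k) (μ := volume)
      (fun v : Fin 2 → ℝ => (Complex.ofReal (f v) * Complex.exp (Complex.I * Complex.ofReal (η ⬝ᵥ v)) : ℂ))
    rw [Fintype.card_fin] at this
    rw [jumpSymbol', ← this]
    apply integral_congr_ae
    filter_upwards with s
    rw [Finset.prod_mul_distrib, ← Complex.exp_sum]
    congr 1
    · rw [Complex.ofReal_prod]
    · congr 1
      rw [← Finset.mul_sum, ← Complex.ofReal_sum, dot_sum_eq]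
  simp_rw [step2]
  -- Step 3: Fubini
  have hjoint : AEStronglyMeasurable
      (Function.uncurry fun (η : Fin 2 → ℝ) (s : Fin k → Fin 2 → ℝ) =>
        Gfun A B Cc w η * (((∏ ℓ, f (s ℓ) : ℝ) : ℂ)
          * Complex.exp (Complex.I * ((η ⬝ᵥ (∑ ℓ, s ℓ) : ℝ) : ℂ))))
      ((volume : Measure (Fin 2 → ℝ)).prod (volume : Measure (Fin k → Fin 2 → ℝ))) := by
    apply Measurable.aestronglyMeasurable
    have hG : Measurable (Gfun A B Cc w) := by
      unfold Gfun; fun_prop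
    have hdot : Measurable (fun q : (Fin 2 → ℝ) × (Fin k → Fin 2 → ℝ) => q.1 ⬝ᵥ (∑ ℓ, q.2 ℓ)) := by
      simp only [dotProduct, Finset.sum_apply]
      apply Finset.measurable_sum
      intro i _
      exact ((measurable_pi_apply i).comp measurable_fst).mul
        (Finset.measurable_sum _ fun ℓ _ =>
          (measurable_pi_apply i).comp ((measurable_pi_apply ℓ).comp measurable_snd))
    have hprod : Measurable (fun q : (Fin 2 → ℝ) × (Fin k → Fin 2 → ℝ) => (∏ ℓ, f (q.2 ℓ) : ℝ)) :=
      Finset.measurable_prod _ fun ℓ _ => hf_meas.comp ((measurable_pi_apply ℓ).comp measurable_snd)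
    exact (hG.comp measurable_fst).mul
      ((Complex.measurable_ofReal.comp hprod).mul
        (Complex.measurable_exp.comp (measurable_const.mul (Complex.measurable_ofReal.comp hdot))))
  have huint : Integrable
      (Function.uncurry fun (η : Fin 2 → ℝ) (s : Fin k → Fin 2 → ℝ) =>
        Gfun A B Cc w η * (((∏ ℓ, f (s ℓ) : ℝ) : ℂ)
          * Complex.exp (Complex.I * ((η ⬝ᵥ (∑ ℓ, s ℓ) : ℝ) : ℂ))))
      ((volume : Measure (Fin 2 → ℝ)).prod (volume : Measure (Fin k → Fin 2 → ℝ))) := by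
    have hbound : Integrable (fun q : (Fin 2 → ℝ) × (Fin k → Fin 2 → ℝ) =>
        ‖Gfun A B Cc w q.1‖ * (∏ ℓ, f (q.2 ℓ) : ℝ))
        ((volume : Measure (Fin 2 → ℝ)).prod (volume : Measure (Fin k → Fin 2 → ℝ))) :=
      (hGint.norm).mul_prod (Integrable.fintype_prod (fun _ => hf_int))
    refine hbound.mono' hjoint (Filter.Eventually.of_forall fun q => ?_)
    rw [Function.uncurry]
    rw [norm_mul, norm_mul]
    have h1 : ‖Complex.exp (Complex.I * ((q.1 ⬝ᵥ (∑ ℓ, q.2 ℓ) : ℝ) : ℂ))‖ = 1 := by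
      rw [Complex.norm_exp]
      simp
    rw [h1, mul_one]
    have h2 : ‖(((∏ ℓ, f (q.2 ℓ) : ℝ)) : ℂ)‖ = ∏ ℓ, f (q.2 ℓ) := by
      rw [Complex.norm_real, Real.norm_of_nonneg (Finset.prod_nonneg fun ℓ _ => hf_nonneg _)]
    rw [h2]
  have swap := MeasureTheory.integral_integral_swap
    (f := fun (η : Fin 2 → ℝ) (s : Fin k → Fin 2 → ℝ) =>
      Gfun A B Cc w η * (((∏ ℓ, f (s ℓ) : ℝ) : ℂ)
        * Complex.exp (Complex.I * ((η ⬝ᵥ (∑ ℓ, s ℓ) : ℝ) : ℂ)))) huint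
  have step3 : ∫ η : Fin 2 → ℝ, Gfun A B Cc w η * ∫ s : Fin k → (Fin 2 → ℝ),
        ((∏ ℓ, f (s ℓ) : ℝ) : ℂ) * Complex.exp (Complex.I * ((η ⬝ᵥ (∑ ℓ, s ℓ) : ℝ) : ℂ))
      = ∫ s : Fin k → (Fin 2 → ℝ), ∫ η : Fin 2 → ℝ,
          Gfun A B Cc w η * (((∏ ℓ, f (s ℓ) : ℝ) : ℂ)
            * Complex.exp (Complex.I * ((η ⬝ᵥ (∑ ℓ, s ℓ) : ℝ) : ℂ))) := by
    rw [← swap]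
    apply integral_congr_ae
    filter_upwards with η
    rw [integral_const_mul]
  rw [step3]
  -- Step 4: inner Gaussian integral for fixed s
  have step4 : ∀ s : Fin k → Fin 2 → ℝ,
      (∫ η : Fin 2 → ℝ, Gfun A B Cc w η * (((∏ ℓ, f (s ℓ) : ℝ) : ℂ)
        * Complex.exp (Complex.I * ((η ⬝ᵥ (∑ ℓ, s ℓ) : ℝ) : ℂ))))
      = ((2 * Real.pi / Real.sqrt (A * Cc - B ^ 2) : ℝ) : ℂ) *
        ((Real.exp (-(1/2) * ((Cc * (w 0 + (∑ ℓ, s ℓ) 0) ^ 2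
            - 2 * B * (w 0 + (∑ ℓ, s ℓ) 0) * (w 1 + (∑ ℓ, s ℓ) 1)
            + A * (w 1 + (∑ ℓ, s ℓ) 1) ^ 2) / (A * Cc - B ^ 2))) * ∏ ℓ, f (s ℓ) : ℝ) : ℂ) := by
    intro s
    have hcomb : ∀ η : Fin 2 → ℝ,
        Gfun A B Cc w η * (((∏ ℓ, f (s ℓ) : ℝ) : ℂ)
          * Complex.exp (Complex.I * ((η ⬝ᵥ (∑ ℓ, s ℓ) : ℝ) : ℂ)))
        = ((∏ ℓ, f (s ℓ) : ℝ) : ℂ) * Gfun A B Cc (fun i => w i + (∑ ℓ, s ℓ) i) η := by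
      intro η
      rw [Gfun, Gfun, ← mul_assoc, mul_comm (Complex.exp _), mul_assoc]
      congr 1
      rw [← Complex.exp_add]
      congr 1
      have : η ⬝ᵥ (∑ ℓ, s ℓ) = η 0 * (∑ ℓ, s ℓ) 0 + η 1 * (∑ ℓ, s ℓ) 1 := by
        simp [dotProduct, Fin.sum_univ_two]
      rw [this]
      push_cast
      ring
    simp_rw [hcomb, integral_const_mul]
    simp only [Gfun]
    rw [gauss_integral_pi A B Cc hC hD (fun i => w i + (∑ ℓ, s ℓ) i)]
    push_cast
    ring
  simp_rw [step4]
  -- Step 5: pull out the constant and pass to a real integral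
  rw [integral_const_mul, integral_ofReal'']
  have hmove : Real.exp θ * ∫ s : Fin k → Fin 2 → ℝ,
      Real.exp (-(1/2) * ((Cc * (w 0 + (∑ ℓ, s ℓ) 0) ^ 2
          - 2 * B * (w 0 + (∑ ℓ, s ℓ) 0) * (w 1 + (∑ ℓ, s ℓ) 1)
          + A * (w 1 + (∑ ℓ, s ℓ) 1) ^ 2) / (A * Cc - B ^ 2))) * ∏ ℓ, f (s ℓ)
      = ∫ s : Fin k → (Fin 2 → ℝ),
          Real.exp (θ - 1/2 * ((Cc * (w 0 + (∑ ℓ, s ℓ) 0) ^ 2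
              - 2 * B * (w 0 + (∑ ℓ, s ℓ) 0) * (w 1 + (∑ ℓ, s ℓ) 1)
              + A * (w 1 + (∑ ℓ, s ℓ) 1) ^ 2) / (A * Cc - B ^ 2))) * ∏ ℓ, f (s ℓ) := by
    rw [← integral_const_mul]
    apply integral_congr_ae
    filter_upwards with s
    rw [← mul_assoc, ← Real.exp_add]
    congr 2
    ring
  rw [← hmove]
  push_cast
  ring


/-- the Green's function admits the infinite series representation
`g(z,Δτ) = (2π √(det C))⁻¹ Σ_{k=0}^∞ g_k(z,Δτ)` with `C = Δτ C̃`, `β = Δτ β̃`,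
`θ = −(r+λ)Δτ`. -/
theorem greens_function_infinite_series_representation
    (r lam σx σy ρ κx κy Δτ : ℝ)
    (hr : 0 < r) (hlam : 0 ≤ lam) (hσx : 0 < σx) (hσy : 0 < σy)
    (hρ₁ : -1 < ρ) (hρ₂ : ρ < 1) (hΔτ : 0 < Δτ)
    (f : (Fin 2 → ℝ) → ℝ) (hf_meas : Measurable f) (hf_nonneg : ∀ s, 0 ≤ f s)
    (hf_prob : ∫ s : Fin 2 → ℝ, f s = 1)
    (z : Fin 2 → ℝ) :
    greenFn r lam σx σy ρ κx κy f Δτ z =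
      Complex.ofReal
        ((1 / (2 * Real.pi * Real.sqrt (Δτ • covMat σx σy ρ).det)) *
          ∑' k : ℕ,
            seriesTerm lam Δτ (Δτ • covMat σx σy ρ) (Δτ • driftVec r lam σx σy κx κy) z
              (-(r + lam) * Δτ) f k) := by
  have hf_int : Integrable f := by
    by_contra h
    rw [integral_undef h] at hf_prob
    norm_num at hf_prob
  set A := Δτ * σx ^ 2 with hA
  set B := Δτ * (ρ * σx * σy) with hB
  set Cc := Δτ * σy ^ 2 with hCc
  have hCpos : 0 < Cc := by rw [hCc]; positivity
  have hDpos : 0 < A * Cc - B ^ 2 := by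
    have h1 : 0 < 1 - ρ ^ 2 := by nlinarith
    have h2 : A * Cc - B ^ 2 = Δτ ^ 2 * σx ^ 2 * σy ^ 2 * (1 - ρ ^ 2) := by
      rw [hA, hB, hCc]; ring
    rw [h2]; positivity
  set θ := -(r + lam) * Δτ with hθ
  set w : Fin 2 → ℝ := fun i => z i + Δτ * driftVec r lam σx σy κx κy i with hw
  set c₁ := lam * Δτ with hc₁
  have hc₁0 : 0 ≤ c₁ := by rw [hc₁]; positivity
  -- the covariance matrix explicitly
  have hmat : Δτ • covMat σx σy ρ = !![A, B; B, Cc] := by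
    ext i j
    fin_cases i <;> fin_cases j <;>
      simp [covMat, hA, hB, hCc]
  have hdet : (Δτ • covMat σx σy ρ).det = A * Cc - B ^ 2 := by
    rw [hmat, Matrix.det_fin_two_of]; ring
  have hinv : (Δτ • covMat σx σy ρ)⁻¹ = (A * Cc - B ^ 2)⁻¹ • !![Cc, -B; -B, A] := by
    rw [hmat]
    apply Matrix.inv_eq_right_inv
    ext i j
    fin_cases i <;> fin_cases j <;>
      · simp [Matrix.mul_apply, Fin.sum_univ_two, Matrix.one_apply]
        field_simp
        ring
  have hquad : ∀ v : Fin 2 → ℝ, v ⬝ᵥ ((Δτ • covMat σx σy ρ)⁻¹).mulVec v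
      = (Cc * v 0 ^ 2 - 2 * B * v 0 * v 1 + A * v 1 ^ 2) / (A * Cc - B ^ 2) := by
    intro v
    rw [hinv]
    simp [Matrix.mulVec, dotProduct, Fin.sum_univ_two, Matrix.vecHead, Matrix.vecTail]
    field_simp
    ring
  -- pointwise expansion of the integrand into a series
  have hpoint : ∀ η : Fin 2 → ℝ,
      Complex.exp (Complex.I * Complex.ofReal (η ⬝ᵥ z)
          + symbolPsi r lam σx σy ρ κx κy f η * Complex.ofReal Δτ)
      = ∑' k : ℕ, ((Real.exp θ : ℝ) : ℂ) * Gfun A B Cc w η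
          * ((c₁ : ℂ) * jumpSymbol' f η) ^ k / (k.factorial : ℂ) := by
    intro η
    have hdq : η ⬝ᵥ (covMat σx σy ρ).mulVec η
        = σx ^ 2 * η 0 ^ 2 + 2 * (ρ * σx * σy) * (η 0) * (η 1) + σy ^ 2 * η 1 ^ 2 := by
      simp [covMat, Matrix.mulVec, dotProduct, Fin.sum_univ_two, Matrix.vecHead, Matrix.vecTail]
      ring
    have hdz : η ⬝ᵥ z = η 0 * z 0 + η 1 * z 1 := by
      simp [dotProduct, Fin.sum_univ_two]
    have hdd : driftVec r lam σx σy κx κy ⬝ᵥ η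
        = (r - lam * κx - σx ^ 2 / 2) * η 0 + (r - lam * κy - σy ^ 2 / 2) * η 1 := by
      simp [driftVec, dotProduct, Fin.sum_univ_two, Matrix.vecHead, Matrix.vecTail]
    have hjs : jumpSymbol f = jumpSymbol' f := rfl
    have hsplit : Complex.I * Complex.ofReal (η ⬝ᵥ z)
          + symbolPsi r lam σx σy ρ κx κy f η * Complex.ofReal Δτ
        = (((θ : ℝ) : ℂ)
            + ((-(1/2) * (A * η 0 ^ 2 + 2 * B * η 0 * η 1 + Cc * η 1 ^ 2) : ℝ) : ℂ)
            + Complex.I * ((η 0 * w 0 + η 1 * w 1 : ℝ) : ℂ))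
          + (c₁ : ℂ) * jumpSymbol' f η := by
      rw [symbolPsi, hdq, hdz, hdd, hjs]
      rw [hA, hB, hCc, hθ, hc₁]
      simp only [hw, driftVec]
      simp only [Matrix.cons_val_zero, Matrix.cons_val_one, Matrix.head_cons]
      push_cast
      ring
    rw [hsplit, Complex.exp_add]
    have hexp2 : Complex.exp ((c₁ : ℂ) * jumpSymbol' f η)
        = ∑' k : ℕ, ((c₁ : ℂ) * jumpSymbol' f η) ^ k / (k.factorial : ℂ) := by
      rw [Complex.exp_eq_exp_ℂ, NormedSpace.exp_eq_tsum_div]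
    rw [hexp2, ← tsum_mul_left]
    congr 1
    funext k
    simp only [Gfun, Complex.ofReal_exp]
    rw [add_assoc, Complex.exp_add, mul_div_assoc]
  rw [greenFn]
  simp_rw [hpoint]
  have hGint' : Integrable (fun η : Fin 2 → ℝ => ((Real.exp θ : ℝ) : ℂ) * Gfun A B Cc w η) :=
    (gauss_integrable_pi A B Cc hCpos hDpos w).const_mul _
  have hss := series_step (fun η : Fin 2 → ℝ => ((Real.exp θ : ℝ) : ℂ) * Gfun A B Cc w η)
    hGint' (jumpSymbol' f) (jump_meas f hf_meas).aestronglyMeasurable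
    (jump_norm_le f hf_nonneg hf_prob) c₁ hc₁0
  rw [hss]
  simp only [term_eval A B Cc θ hCpos hDpos f hf_meas hf_nonneg hf_int w c₁]
  -- rewrite the series terms on the right-hand side
  have hterm : ∀ k : ℕ, seriesTerm lam Δτ (Δτ • covMat σx σy ρ)
      (Δτ • driftVec r lam σx σy κx κy) z θ f k
      = c₁ ^ k / (k.factorial : ℝ) *
        ∫ s : Fin k → (Fin 2 → ℝ),
          Real.exp (θ - 1/2 * ((Cc * (w 0 + (∑ ℓ, s ℓ) 0) ^ 2
              - 2 * B * (w 0 + (∑ ℓ, s ℓ) 0) * (w 1 + (∑ ℓ, s ℓ) 1)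
              + A * (w 1 + (∑ ℓ, s ℓ) 1) ^ 2) / (A * Cc - B ^ 2))) * ∏ ℓ, f (s ℓ) := by
    intro k
    rw [seriesTerm, ← hc₁]
    congr 1
    apply integral_congr_ae
    filter_upwards with s
    have hv : (Δτ • driftVec r lam σx σy κx κy + z + ∑ ℓ, s ℓ)
        = fun i => w i + (∑ ℓ, s ℓ) i := by
      funext i
      simp only [Pi.add_apply, Pi.smul_apply, smul_eq_mul, hw]
      ring
    rw [hv, hquad]
  simp only [hterm]
  simp_rw [← Complex.ofReal_mul]
  rw [← Complex.ofReal_tsum, ← Complex.ofReal_mul]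
  congr 1
  rw [tsum_mul_left, hdet]
  have hsq : 0 < Real.sqrt (A * Cc - B ^ 2) := Real.sqrt_pos.mpr hDpos
  have hπ : (0:ℝ) < Real.pi := Real.pi_pos
  field_simp

end aux
end
end

section
/- Let r > 0, λ ≥ 0, σx, σy > 0, ρ ∈ (−1,1), κx, κy ∈ ℝ, let f be a probability density on ℝ², and fix Δτ > 0. For an integer K ≥ 0, let g(z, Δτ, K) = (2π √(det C))⁻¹ Σ_{k=0}^K g_k(z,Δτ) denote the truncation of the Green's-function series to its first K+1 terms. Then for every z ∈ ℝ² and every integer K with K + 1 > λΔτ: 0 ≤ g(z,Δτ) − g(z, Δτ, K) ≤ ( e^{−(r+λ)Δτ} / (2π √(det C)) ) · (e λ Δτ)^{K+1} / (K+1)^{K+1}. -/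
open MeasureTheory Matrix
open scoped BigOperators

noncomputable section

/-- The full series `g(z, Δτ) = (2π √(det C))⁻¹ Σ_{k=0}^∞ g_k(z,Δτ)`, with
`C = Δτ C̃`, `β = Δτ β̃`, `θ = −(r+λ)Δτ`. -/
def gFull (r lam σx σy ρ κx κy Δτ : ℝ) (f : (Fin 2 → ℝ) → ℝ) (z : Fin 2 → ℝ) : ℝ :=
  1 / (2 * Real.pi * Real.sqrt (Δτ • covMat σx σy ρ).det) *
    ∑' k : ℕ,
      seriesTerm lam Δτ (Δτ • covMat σx σy ρ) (Δτ • driftVec r lam σx σy κx κy) z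
        (-(r + lam) * Δτ) f k

/-- The truncation `g(z, Δτ, K) = (2π √(det C))⁻¹ Σ_{k=0}^K g_k(z,Δτ)` of the
Green's-function series to its first `K+1` terms. -/
def gTrunc (r lam σx σy ρ κx κy Δτ : ℝ) (f : (Fin 2 → ℝ) → ℝ) (z : Fin 2 → ℝ) (K : ℕ) : ℝ :=
  1 / (2 * Real.pi * Real.sqrt (Δτ • covMat σx σy ρ).det) *
    ∑ k ∈ Finset.range (K + 1),
      seriesTerm lam Δτ (Δτ • covMat σx σy ρ) (Δτ • driftVec r lam σx σy κx κy) z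
        (-(r + lam) * Δτ) f k

set_option maxHeartbeats 1000000

lemma smul_covMat (σx σy ρ Δτ : ℝ) :
    Δτ • covMat σx σy ρ = !![Δτ * σx ^ 2, Δτ * (ρ * σx * σy); Δτ * (ρ * σx * σy), Δτ * σy ^ 2] := by
  ext i j; fin_cases i <;> fin_cases j <;> simp [covMat]

lemma covMat_det_pos {σx σy ρ Δτ : ℝ} (hσx : 0 < σx) (hσy : 0 < σy)
    (hρ₁ : -1 < ρ) (hρ₂ : ρ < 1) (hΔτ : 0 < Δτ) : 0 < (Δτ • covMat σx σy ρ).det := by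
  rw [smul_covMat, Matrix.det_fin_two_of]
  nlinarith [mul_pos (mul_pos (mul_pos (pow_pos hΔτ 2) (pow_pos hσx 2)) (pow_pos hσy 2))
    (show (0:ℝ) < 1 - ρ^2 by nlinarith)]

lemma covMat_quad_nonneg {σx σy ρ Δτ : ℝ} (hσx : 0 < σx) (hσy : 0 < σy)
    (hρ₁ : -1 < ρ) (hρ₂ : ρ < 1) (hΔτ : 0 < Δτ) (v : Fin 2 → ℝ) :
    0 ≤ v ⬝ᵥ ((Δτ • covMat σx σy ρ)⁻¹).mulVec v := by
  have hd := covMat_det_pos hσx hσy hρ₁ hρ₂ hΔτ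
  rw [Matrix.inv_def, Ring.inverse_eq_inv']
  rw [smul_covMat] at hd ⊢
  rw [Matrix.det_fin_two_of] at hd ⊢
  rw [Matrix.adjugate_fin_two_of]
  simp only [Matrix.mulVec, dotProduct, Fin.sum_univ_two, Matrix.smul_apply,
    Matrix.of_apply, Matrix.cons_val', Matrix.cons_val_zero, Matrix.cons_val_one,
    Matrix.head_cons, Matrix.empty_val', Matrix.cons_val_fin_one, Matrix.head_fin_const,
    smul_eq_mul]
  have h0 : 0 ≤ (Δτ * σx ^ 2 * (Δτ * σy ^ 2) - Δτ * (ρ * σx * σy) * (Δτ * (ρ * σx * σy)))⁻¹ :=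
    le_of_lt (inv_pos.mpr hd)
  have key : 0 ≤ Δτ * σy ^ 2 * (v 0)^2 - 2 * (Δτ * (ρ * σx * σy)) * v 0 * v 1 + Δτ * σx ^ 2 * (v 1)^2 := by
    nlinarith [mul_nonneg hΔτ.le (sq_nonneg (σy * v 0 - ρ * σx * v 1)),
      mul_nonneg hΔτ.le (mul_nonneg (show (0:ℝ) ≤ 1 - ρ^2 by nlinarith) (sq_nonneg (σx * v 1)))]
  nlinarith [mul_nonneg h0 key]

lemma exp_tsum' (x : ℝ) : ∑' n : ℕ, x ^ n / (n.factorial : ℝ) = Real.exp x := by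
  rw [Real.exp_eq_exp_ℝ]
  exact (NormedSpace.expSeries_div_hasSum_exp x).tsum_eq

/-- Poisson tail bound. -/
lemma poisson_tail_bound (x : ℝ) (n : ℕ) (hx : 0 ≤ x) (hn : x ≤ (n : ℝ)) :
    ∑' j : ℕ, x ^ (j + n) / ((j + n).factorial : ℝ) ≤ (Real.exp 1 * x) ^ n / (n : ℝ) ^ n := by
  rcases Nat.eq_zero_or_pos n with hn0 | hn0
  · have hx0 : x = 0 := le_antisymm (by simpa [hn0] using hn) hx
    subst hn0; subst hx0
    simp only [add_zero, pow_zero, mul_zero]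
    rw [exp_tsum' 0]
    norm_num
  have hnpos : (0:ℝ) < (n:ℝ) := by exact_mod_cast hn0
  have hsum : Summable (fun k : ℕ => (n:ℝ) ^ k / (k.factorial : ℝ)) :=
    Real.summable_pow_div_factorial _
  have hsum' : Summable (fun j : ℕ => (n:ℝ) ^ (j + n) / ((j + n).factorial : ℝ)) :=
    (summable_nat_add_iff n).2 hsum
  have hsumx : Summable (fun j : ℕ => x ^ (j + n) / ((j + n).factorial : ℝ)) :=
    (summable_nat_add_iff n).2 (Real.summable_pow_div_factorial x)
  have hterm : ∀ j : ℕ, x ^ (j + n) / ((j + n).factorial : ℝ) ≤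
      x ^ n / (n:ℝ) ^ n * ((n:ℝ) ^ (j + n) / ((j + n).factorial : ℝ)) := by
    intro j
    have hnum : x ^ (j + n) ≤ x ^ n / (n:ℝ) ^ n * (n:ℝ) ^ (j + n) := by
      rw [div_mul_eq_mul_div, le_div_iff₀ (by positivity)]
      have h1 : x ^ (j+n) * (n:ℝ) ^ n = (x ^ n * (n:ℝ) ^ n) * x ^ j := by ring
      have h2 : x ^ n * (n:ℝ) ^ (j+n) = (x ^ n * (n:ℝ) ^ n) * (n:ℝ) ^ j := by ring
      rw [h1, h2]
      exact mul_le_mul_of_nonneg_left (pow_le_pow_left₀ hx hn j) (by positivity)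
    have : x ^ n / (n:ℝ) ^ n * ((n:ℝ) ^ (j + n) / ((j + n).factorial : ℝ)) =
        (x ^ n / (n:ℝ) ^ n * (n:ℝ) ^ (j + n)) / ((j + n).factorial : ℝ) := by ring
    rw [this]
    gcongr
  have htail : ∑' j : ℕ, (n:ℝ) ^ (j + n) / ((j + n).factorial : ℝ) ≤ Real.exp n := by
    have h := Summable.sum_add_tsum_nat_add n hsum
    have hpart : 0 ≤ ∑ i ∈ Finset.range n, (n:ℝ) ^ i / (i.factorial : ℝ) :=
      Finset.sum_nonneg fun i _ => by positivity
    rw [← exp_tsum' (n:ℝ)]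
    linarith [h]
  calc ∑' j : ℕ, x ^ (j + n) / ((j + n).factorial : ℝ)
      ≤ ∑' j : ℕ, x ^ n / (n:ℝ) ^ n * ((n:ℝ) ^ (j + n) / ((j + n).factorial : ℝ)) :=
        Summable.tsum_le_tsum hterm hsumx (hsum'.mul_left _)
    _ = x ^ n / (n:ℝ) ^ n * ∑' j : ℕ, (n:ℝ) ^ (j + n) / ((j + n).factorial : ℝ) := tsum_mul_left
    _ ≤ x ^ n / (n:ℝ) ^ n * Real.exp n := by
        apply mul_le_mul_of_nonneg_left htail (by positivity)
    _ = (Real.exp 1 * x) ^ n / (n : ℝ) ^ n := by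
        have he : Real.exp (n:ℝ) = Real.exp 1 ^ n := by
          rw [← Real.exp_nat_mul]; norm_num
        rw [he, mul_pow]; ring

lemma seriesTerm_nonneg' {lam Δτ θ : ℝ} {C : Matrix (Fin 2) (Fin 2) ℝ} {β z : Fin 2 → ℝ}
    {f : (Fin 2 → ℝ) → ℝ} (hlam : 0 ≤ lam) (hΔτ : 0 ≤ Δτ) (hf : ∀ s, 0 ≤ f s) (k : ℕ) :
    0 ≤ seriesTerm lam Δτ C β z θ f k := by
  apply mul_nonneg (by positivity)
  apply integral_nonneg
  intro s
  exact mul_nonneg (Real.exp_nonneg _) (Finset.prod_nonneg fun ℓ _ => hf _)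

lemma seriesTerm_le' {lam Δτ θ : ℝ} {C : Matrix (Fin 2) (Fin 2) ℝ} {β z : Fin 2 → ℝ}
    {f : (Fin 2 → ℝ) → ℝ} (hlam : 0 ≤ lam) (hΔτ : 0 ≤ Δτ)
    (hf : ∀ s, 0 ≤ f s) (hf_int : Integrable f) (hf_prob : ∫ s, f s = 1)
    (hq : ∀ v, 0 ≤ v ⬝ᵥ (C⁻¹).mulVec v) (k : ℕ) :
    seriesTerm lam Δτ C β z θ f k ≤ (lam * Δτ) ^ k / (k.factorial : ℝ) * Real.exp θ := by
  unfold seriesTerm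
  have hint : Integrable (fun s : Fin k → (Fin 2 → ℝ) => Real.exp θ * ∏ ℓ, f (s ℓ)) :=
    (Integrable.fintype_prod (f := fun _ : Fin k => f) fun _ => hf_int).const_mul _
  have hmono : (∫ s : Fin k → (Fin 2 → ℝ),
      Real.exp (θ - 1 / 2 * ((β + z + ∑ ℓ, s ℓ) ⬝ᵥ (C⁻¹).mulVec (β + z + ∑ ℓ, s ℓ))) *
        ∏ ℓ, f (s ℓ)) ≤ ∫ s : Fin k → (Fin 2 → ℝ), Real.exp θ * ∏ ℓ, f (s ℓ) := by
    apply integral_mono_of_nonneg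
    · filter_upwards with s
      exact mul_nonneg (Real.exp_nonneg _) (Finset.prod_nonneg fun ℓ _ => hf _)
    · exact hint
    · filter_upwards with s
      apply mul_le_mul_of_nonneg_right _ (Finset.prod_nonneg fun ℓ _ => hf _)
      apply Real.exp_le_exp.2
      have := hq (β + z + ∑ ℓ, s ℓ)
      linarith
  have hval : (∫ s : Fin k → (Fin 2 → ℝ), Real.exp θ * ∏ ℓ, f (s ℓ)) = Real.exp θ := by
    rw [MeasureTheory.integral_const_mul, MeasureTheory.volume_pi, integral_fintype_prod_eq_pow (ι := Fin k) f, hf_prob]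
    simp
  calc ((lam * Δτ) ^ k / (k.factorial : ℝ)) * _ ≤ ((lam * Δτ) ^ k / (k.factorial : ℝ)) *
        (∫ s : Fin k → (Fin 2 → ℝ), Real.exp θ * ∏ ℓ, f (s ℓ)) :=
        mul_le_mul_of_nonneg_left hmono (by positivity)
    _ = (lam * Δτ) ^ k / (k.factorial : ℝ) * Real.exp θ := by rw [hval]

/-- for `K + 1 > λΔτ`,
`0 ≤ g(z,Δτ) − g(z,Δτ,K) ≤ (e^{−(r+λ)Δτ}/(2π√(det C))) (eλΔτ)^{K+1}/(K+1)^{K+1}`. -/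
theorem greens_function_truncation_error
    (r lam σx σy ρ κx κy Δτ : ℝ)
    (hr : 0 < r) (hlam : 0 ≤ lam) (hσx : 0 < σx) (hσy : 0 < σy)
    (hρ₁ : -1 < ρ) (hρ₂ : ρ < 1) (hΔτ : 0 < Δτ)
    (f : (Fin 2 → ℝ) → ℝ) (hf_meas : Measurable f) (hf_nonneg : ∀ s, 0 ≤ f s)
    (hf_prob : ∫ s : Fin 2 → ℝ, f s = 1)
    (z : Fin 2 → ℝ) (K : ℕ) (hK : lam * Δτ < (K : ℝ) + 1) :
    0 ≤ gFull r lam σx σy ρ κx κy Δτ f z - gTrunc r lam σx σy ρ κx κy Δτ f z K ∧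
      gFull r lam σx σy ρ κx κy Δτ f z - gTrunc r lam σx σy ρ κx κy Δτ f z K ≤
        Real.exp (-(r + lam) * Δτ) / (2 * Real.pi * Real.sqrt (Δτ • covMat σx σy ρ).det) *
          ((Real.exp 1 * lam * Δτ) ^ (K + 1) / ((K : ℝ) + 1) ^ (K + 1)) := by
  have hf_int : Integrable f := by
    by_contra h
    rw [MeasureTheory.integral_undef h] at hf_prob
    exact one_ne_zero hf_prob.symm
  set θ : ℝ := -(r + lam) * Δτ with hθ
  set x : ℝ := lam * Δτ with hx
  have hx0 : 0 ≤ x := mul_nonneg hlam hΔτ.le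
  set a : ℕ → ℝ := seriesTerm lam Δτ (Δτ • covMat σx σy ρ)
    (Δτ • driftVec r lam σx σy κx κy) z θ f with ha
  have hq := covMat_quad_nonneg hσx hσy hρ₁ hρ₂ hΔτ
  have ha_nonneg : ∀ k, 0 ≤ a k := fun k => seriesTerm_nonneg' hlam hΔτ.le hf_nonneg k
  have ha_le : ∀ k, a k ≤ x ^ k / (k.factorial : ℝ) * Real.exp θ := fun k =>
    seriesTerm_le' hlam hΔτ.le hf_nonneg hf_int hf_prob hq k
  have hbsum : Summable (fun k : ℕ => x ^ k / (k.factorial : ℝ) * Real.exp θ) :=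
    (Real.summable_pow_div_factorial x).mul_right _
  have ha_sum : Summable a := Summable.of_nonneg_of_le ha_nonneg ha_le hbsum
  have hdet := covMat_det_pos hσx hσy hρ₁ hρ₂ hΔτ
  have hc : 0 < 2 * Real.pi * Real.sqrt (Δτ • covMat σx σy ρ).det :=
    mul_pos (mul_pos two_pos Real.pi_pos) (Real.sqrt_pos.2 hdet)
  set c : ℝ := 1 / (2 * Real.pi * Real.sqrt (Δτ • covMat σx σy ρ).det) with hcdef
  have hc0 : 0 < c := by positivity
  have hsplit := Summable.sum_add_tsum_nat_add (K + 1) ha_sum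
  have hdiff : gFull r lam σx σy ρ κx κy Δτ f z - gTrunc r lam σx σy ρ κx κy Δτ f z K =
      c * ∑' j : ℕ, a (j + (K + 1)) := by
    rw [gFull, gTrunc, ← mul_sub]
    congr 1
    linarith [hsplit]
  have htail_nonneg : 0 ≤ ∑' j : ℕ, a (j + (K + 1)) :=
    tsum_nonneg fun j => ha_nonneg _
  constructor
  · rw [hdiff]
    exact mul_nonneg hc0.le htail_nonneg
  · rw [hdiff]
    have hatail : Summable (fun j : ℕ => a (j + (K + 1))) :=
      (summable_nat_add_iff (K + 1)).2 ha_sum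
    have hbtail : Summable (fun j : ℕ => x ^ (j + (K + 1)) / ((j + (K + 1)).factorial : ℝ)
        * Real.exp θ) := (summable_nat_add_iff (K + 1)).2 hbsum
    have h1 : ∑' j : ℕ, a (j + (K + 1)) ≤
        ∑' j : ℕ, x ^ (j + (K + 1)) / ((j + (K + 1)).factorial : ℝ) * Real.exp θ :=
      Summable.tsum_le_tsum (fun j => ha_le _) hatail hbtail
    have h2 : ∑' j : ℕ, x ^ (j + (K + 1)) / ((j + (K + 1)).factorial : ℝ) * Real.exp θ =
        (∑' j : ℕ, x ^ (j + (K + 1)) / ((j + (K + 1)).factorial : ℝ)) * Real.exp θ :=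
      tsum_mul_right
    have hn : x ≤ ((K + 1 : ℕ) : ℝ) := by push_cast; linarith
    have h3 := poisson_tail_bound x (K + 1) hx0 hn
    have hcast : (((K + 1 : ℕ)) : ℝ) ^ (K + 1) = ((K : ℝ) + 1) ^ (K + 1) := by push_cast; ring
    have h4 : ∑' j : ℕ, a (j + (K + 1)) ≤
        (Real.exp 1 * x) ^ (K + 1) / ((K : ℝ) + 1) ^ (K + 1) * Real.exp θ := by
      rw [← hcast]
      calc ∑' j : ℕ, a (j + (K + 1)) ≤ _ := h1
        _ = _ := h2
        _ ≤ (Real.exp 1 * x) ^ (K + 1) / (((K + 1 : ℕ)) : ℝ) ^ (K + 1) * Real.exp θ :=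
          mul_le_mul_of_nonneg_right h3 (Real.exp_nonneg _)
    calc c * ∑' j : ℕ, a (j + (K + 1)) ≤
        c * ((Real.exp 1 * x) ^ (K + 1) / ((K : ℝ) + 1) ^ (K + 1) * Real.exp θ) :=
          mul_le_mul_of_nonneg_left h4 hc0.le
      _ = Real.exp θ / (2 * Real.pi * Real.sqrt (Δτ • covMat σx σy ρ).det) *
          ((Real.exp 1 * lam * Δτ) ^ (K + 1) / ((K : ℝ) + 1) ^ (K + 1)) := by
          rw [hcdef, hx]
          ring
end
end

section
/- In the two-asset Merton jump-diffusion model, fix constants C₁, C₂, C₃ > 0 independent of h, and for h > 0 set Δx = C₁ h, Δy = C₂ h, Δτ = C₃ h. Then there exist a constant C' > 0 and h₀ > 0, both independent of h, such that for every h ∈ (0, h₀) and every z ∈ ℝ²: 0 ≤ Δx · Δy · g(z, Δτ) ≤ C'. Consequently the rescaled scheme weights Δx Δy g(x_{n−l}, y_{j−d}, Δτ) at all grid points are uniformly bounded as h → 0, and the same bound holds when g is replaced by any partial sum of its series representation (since all series terms are nonnegative). -/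
open MeasureTheory Matrix
open scoped BigOperators

noncomputable section

/-- The jump covariance matrix `C_M`. -/
def jumpCov (σtx σty ρh : ℝ) : Matrix (Fin 2) (Fin 2) ℝ :=
  !![σtx ^ 2, ρh * σtx * σty; ρh * σtx * σty, σty ^ 2]

/-- The `k`-th closed-form term of the Merton Green's-function series
(the `k = 0` case being `g₀(z,Δτ) = exp(θ − ½(β+z)ᵀC⁻¹(β+z))/(2π√(det C))`). -/
def mertonTerm (lam Δτ : ℝ) (C CM : Matrix (Fin 2) (Fin 2) ℝ) (β μ z : Fin 2 → ℝ) (θ : ℝ)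
    (k : ℕ) : ℝ :=
  (lam * Δτ) ^ k / (k.factorial : ℝ) *
    Real.exp (θ - 1 / 2 *
      ((β + z + (k : ℝ) • μ) ⬝ᵥ ((C + (k : ℝ) • CM)⁻¹).mulVec (β + z + (k : ℝ) • μ))) /
    (2 * Real.pi * Real.sqrt (C + (k : ℝ) • CM).det)

/-- The Merton Green's function, defined by its series representation
`g(z,Δτ) = g₀(z,Δτ) + Σ_{k=1}^∞ g_k(z,Δτ)`, with `C = Δτ C̃`, `β = Δτ β̃`,
`θ = −(r+λ)Δτ`. -/
def mertonGreen (r lam σx σy ρ κx κy : ℝ) (CM : Matrix (Fin 2) (Fin 2) ℝ) (μ : Fin 2 → ℝ)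
    (Δτ : ℝ) (z : Fin 2 → ℝ) : ℝ :=
  ∑' k : ℕ,
    mertonTerm lam Δτ (Δτ • covMat σx σy ρ) CM (Δτ • driftVec r lam σx σy κx κy) μ z
      (-(r + lam) * Δτ) k

/-- A partial sum of the Merton Green's-function series (its first `K+1` terms). -/
def mertonGreenPartial (r lam σx σy ρ κx κy : ℝ) (CM : Matrix (Fin 2) (Fin 2) ℝ)
    (μ : Fin 2 → ℝ) (Δτ : ℝ) (K : ℕ) (z : Fin 2 → ℝ) : ℝ :=
  ∑ k ∈ Finset.range (K + 1),
    mertonTerm lam Δτ (Δτ • covMat σx σy ρ) CM (Δτ • driftVec r lam σx σy κx κy) μ z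
      (-(r + lam) * Δτ) k


lemma aux_cross (a0 a1 a2 b0 b1 b2 : ℝ) (ha0 : 0 < a0) (ha2 : 0 < a2)
    (hb0 : 0 < b0) (hb2 : 0 < b2) (hA : a1^2 ≤ a0*a2) (hB : b1^2 ≤ b0*b2) :
    0 ≤ a0*b2 + a2*b0 - 2*a1*b1 := by
  rcases le_or_gt (a1*b1) 0 with hP | hP
  · nlinarith [mul_pos ha0 hb2, mul_pos ha2 hb0]
  · have h2 : a1^2 * b1^2 ≤ (a0*a2) * (b0*b2) :=
      mul_le_mul hA hB (sq_nonneg b1) (le_of_lt (mul_pos ha0 ha2))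
    nlinarith [sq_nonneg (a0*b2 - a2*b0), mul_pos ha0 hb2, mul_pos ha2 hb0, hP,
      mul_pos hP hP]

lemma quadform_nonneg (a b c : ℝ) (ha : 0 < a) (hd : 0 < a * c - b ^ 2) (v : Fin 2 → ℝ) :
    0 ≤ v ⬝ᵥ ((!![a, b; b, c] : Matrix (Fin 2) (Fin 2) ℝ)⁻¹).mulVec v := by
  have hdet : (!![a, b; b, c] : Matrix (Fin 2) (Fin 2) ℝ).det = a * c - b ^ 2 := by
    simp [Matrix.det_fin_two_of]; ring
  rw [Matrix.inv_def, Matrix.adjugate_fin_two, hdet, Ring.inverse_eq_inv']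
  have h1 : 0 < (a * c - b ^ 2)⁻¹ := inv_pos.mpr hd
  simp [Matrix.mulVec, dotProduct, Fin.sum_univ_two, smul_eq_mul]
  nlinarith [sq_nonneg (a * v 1 - b * v 0), mul_nonneg hd.le (sq_nonneg (v 0)),
    mul_pos h1 ha, sq_nonneg (v 0), sq_nonneg (v 1)]

lemma mertonTerm_nonneg (lam Δτ θ : ℝ) (C CM : Matrix (Fin 2) (Fin 2) ℝ)
    (β μ z : Fin 2 → ℝ) (k : ℕ) (hx : 0 ≤ lam * Δτ) :
    0 ≤ mertonTerm lam Δτ C CM β μ z θ k := by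
  unfold mertonTerm
  have h1 : (0:ℝ) ≤ (lam*Δτ)^k / (k.factorial : ℝ) :=
    div_nonneg (pow_nonneg hx k) (Nat.cast_nonneg _)
  exact div_nonneg (mul_nonneg h1 (Real.exp_pos _).le) (by positivity)

lemma mertonTerm_le (lam Δτ θ m a b c : ℝ) (C CM : Matrix (Fin 2) (Fin 2) ℝ)
    (β μ z : Fin 2 → ℝ) (k : ℕ)
    (hM : C + (k:ℝ) • CM = !![a, b; b, c]) (ha : 0 < a) (hm : 0 < m)
    (hdm : m ≤ a * c - b ^ 2) (hx : 0 ≤ lam * Δτ) (hθ : θ ≤ 0) :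
    mertonTerm lam Δτ C CM β μ z θ k ≤
      (lam * Δτ) ^ k / (k.factorial : ℝ) * (1 / (2 * Real.pi * Real.sqrt m)) := by
  unfold mertonTerm
  rw [hM]
  have hd : 0 < a * c - b ^ 2 := lt_of_lt_of_le hm hdm
  have hdet : (!![a, b; b, c] : Matrix (Fin 2) (Fin 2) ℝ).det = a * c - b ^ 2 := by
    simp [Matrix.det_fin_two_of]; ring
  rw [hdet]
  have hq := quadform_nonneg a b c ha hd (β + z + (k:ℝ) • μ)
  have hexp : Real.exp (θ - 1 / 2 *
      ((β + z + (k:ℝ) • μ) ⬝ᵥ ((!![a, b; b, c] : Matrix (Fin 2) (Fin 2) ℝ)⁻¹).mulVec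
        (β + z + (k:ℝ) • μ))) ≤ 1 := by
    apply Real.exp_le_one_iff.mpr; linarith
  have h1 : (0:ℝ) ≤ (lam*Δτ)^k / (k.factorial : ℝ) :=
    div_nonneg (pow_nonneg hx k) (Nat.cast_nonneg _)
  have hsm : 0 < Real.sqrt m := Real.sqrt_pos.mpr hm
  have hsq : Real.sqrt m ≤ Real.sqrt (a * c - b ^ 2) := Real.sqrt_le_sqrt hdm
  rw [mul_one_div]
  apply div_le_div₀ h1 _ (by positivity) _
  · calc _ ≤ (lam * Δτ) ^ k / (k.factorial : ℝ) * 1 :=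
        mul_le_mul_of_nonneg_left hexp h1
      _ = _ := mul_one _
  · have := Real.pi_pos; nlinarith

set_option maxHeartbeats 1000000 in
/-- with `Δx = C₁h`, `Δy = C₂h`, `Δτ = C₃h`, the rescaled weights
`Δx Δy g(z, Δτ)` are nonnegative and uniformly bounded for all sufficiently small
`h` and all `z ∈ ℝ²`; the same bound holds for every partial sum of the series. -/
theorem rescaled_weights_uniformly_bounded
    (r lam σx σy ρ κx κy σtx σty ρh C₁ C₂ C₃ : ℝ) (μ : Fin 2 → ℝ)
    (hr : 0 < r) (hlam : 0 ≤ lam) (hσx : 0 < σx) (hσy : 0 < σy)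
    (hρ₁ : -1 < ρ) (hρ₂ : ρ < 1)
    (hσtx : 0 < σtx) (hσty : 0 < σty) (hρh₁ : -1 < ρh) (hρh₂ : ρh < 1)
    (hC₁ : 0 < C₁) (hC₂ : 0 < C₂) (hC₃ : 0 < C₃) :
    ∃ C' > (0 : ℝ), ∃ h₀ > (0 : ℝ), ∀ h : ℝ, 0 < h → h < h₀ → ∀ z : Fin 2 → ℝ,
      (0 ≤ C₁ * h * (C₂ * h) *
          mertonGreen r lam σx σy ρ κx κy (jumpCov σtx σty ρh) μ (C₃ * h) z ∧
        C₁ * h * (C₂ * h) *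
          mertonGreen r lam σx σy ρ κx κy (jumpCov σtx σty ρh) μ (C₃ * h) z ≤ C') ∧
      ∀ K : ℕ,
        0 ≤ C₁ * h * (C₂ * h) *
            mertonGreenPartial r lam σx σy ρ κx κy (jumpCov σtx σty ρh) μ (C₃ * h) K z ∧
          C₁ * h * (C₂ * h) *
            mertonGreenPartial r lam σx σy ρ κx κy (jumpCov σtx σty ρh) μ (C₃ * h) K z ≤ C' := by
  set d1 : ℝ := σx^2*σy^2*(1-ρ^2) with hd1def
  set d2 : ℝ := σtx^2*σty^2*(1-ρh^2) with hd2def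
  have hρsq : ρ^2 < 1 := by nlinarith [mul_pos (show (0:ℝ) < 1 - ρ by linarith) (show (0:ℝ) < 1 + ρ by linarith)]
  have hρhsq : ρh^2 < 1 := by nlinarith [mul_pos (show (0:ℝ) < 1 - ρh by linarith) (show (0:ℝ) < 1 + ρh by linarith)]
  have hd1 : 0 < d1 := by rw [hd1def]; nlinarith [mul_pos (pow_pos hσx 2) (pow_pos hσy 2)]
  have hd2 : 0 < d2 := by rw [hd2def]; nlinarith [mul_pos (pow_pos hσtx 2) (pow_pos hσty 2)]
  have hs1 : 0 < Real.sqrt d1 := Real.sqrt_pos.mpr hd1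
  have hs2 : 0 < Real.sqrt d2 := Real.sqrt_pos.mpr hd2
  set S : ℝ := 1/(C₃*Real.sqrt d1) + 1/Real.sqrt d2 with hSdef
  have hS : 0 < S := by rw [hSdef]; positivity
  refine ⟨C₁*C₂*Real.exp (lam*C₃) * S / (2*Real.pi), by positivity, 1, one_pos, ?_⟩
  intro h hh hh1 z
  set Δτ : ℝ := C₃ * h with hΔτdef
  have hΔτ : 0 < Δτ := mul_pos hC₃ hh
  have hx : 0 ≤ lam * Δτ := mul_nonneg hlam hΔτ.le
  have hθ : -(r+lam) * Δτ ≤ 0 := by nlinarith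
  set m : ℝ := min (Δτ^2*d1) d2 with hmdef
  have hm : 0 < m := lt_min (by positivity) hd2
  have hsm : 0 < Real.sqrt m := Real.sqrt_pos.mpr hm
  -- entrywise description of C + k • CM
  have hMk : ∀ k : ℕ, Δτ • covMat σx σy ρ + (k:ℝ) • jumpCov σtx σty ρh =
      !![Δτ*σx^2 + k*σtx^2, Δτ*(ρ*σx*σy) + k*(ρh*σtx*σty);
         Δτ*(ρ*σx*σy) + k*(ρh*σtx*σty), Δτ*σy^2 + k*σty^2] := by
    intro k
    ext i j
    fin_cases i <;> fin_cases j <;>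
      simp [covMat, jumpCov, Matrix.add_apply, Matrix.smul_apply, smul_eq_mul]
  -- determinant lower bound
  have hdetlb : ∀ k : ℕ, m ≤ (Δτ*σx^2 + k*σtx^2) * (Δτ*σy^2 + k*σty^2)
      - (Δτ*(ρ*σx*σy) + k*(ρh*σtx*σty))^2 := by
    intro k
    rcases k with _ | n
    · have : (Δτ*σx^2 + (0:ℕ)*σtx^2) * (Δτ*σy^2 + (0:ℕ)*σty^2)
          - (Δτ*(ρ*σx*σy) + (0:ℕ)*(ρh*σtx*σty))^2 = Δτ^2*d1 := by
        push_cast; rw [hd1def]; ring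
      rw [this]; exact min_le_left _ _
    · have hk1 : (1:ℝ) ≤ ((n+1 : ℕ) : ℝ) := by exact_mod_cast Nat.one_le_iff_ne_zero.mpr (Nat.succ_ne_zero n)
      set K : ℝ := ((n+1 : ℕ) : ℝ) with hKdef
      have hK : 0 < K := lt_of_lt_of_le one_pos hk1
      have hA : (Δτ*(ρ*σx*σy))^2 ≤ (Δτ*σx^2)*(Δτ*σy^2) := by
        nlinarith [mul_nonneg (show (0:ℝ) ≤ 1 - ρ^2 by linarith)
          (show (0:ℝ) ≤ Δτ^2*(σx^2*σy^2) by positivity)]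
      have hB : (K*(ρh*σtx*σty))^2 ≤ (K*σtx^2)*(K*σty^2) := by
        nlinarith [mul_nonneg (show (0:ℝ) ≤ 1 - ρh^2 by linarith)
          (show (0:ℝ) ≤ K^2*(σtx^2*σty^2) by positivity)]
      have hcross := aux_cross (Δτ*σx^2) (Δτ*(ρ*σx*σy)) (Δτ*σy^2)
        (K*σtx^2) (K*(ρh*σtx*σty)) (K*σty^2)
        (by positivity) (by positivity) (by positivity) (by positivity) hA hB
      have hmin : m ≤ d2 := min_le_right _ _
      have hKd2 : d2 ≤ K^2 * d2 := by
        nlinarith [mul_nonneg (mul_nonneg (show (0:ℝ) ≤ K - 1 by linarith)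
          (show (0:ℝ) ≤ K + 1 by linarith)) hd2.le]
      have hexpand : (Δτ*σx^2 + K*σtx^2) * (Δτ*σy^2 + K*σty^2)
          - (Δτ*(ρ*σx*σy) + K*(ρh*σtx*σty))^2
          = Δτ^2*d1 + K^2*d2 + (Δτ*σx^2*(K*σty^2) + Δτ*σy^2*(K*σtx^2)
            - 2*(Δτ*(ρ*σx*σy))*(K*(ρh*σtx*σty))) := by
        rw [hd1def, hd2def]; ring
      rw [hexpand]
      have hpos : (0:ℝ) ≤ Δτ^2*d1 := by positivity
      linarith
  -- the series terms
  set T : ℕ → ℝ := fun k => mertonTerm lam Δτ (Δτ • covMat σx σy ρ) (jumpCov σtx σty ρh)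
      (Δτ • driftVec r lam σx σy κx κy) μ z (-(r + lam) * Δτ) k with hTdef
  have hTnn : ∀ k, 0 ≤ T k := fun k => mertonTerm_nonneg _ _ _ _ _ _ _ _ _ hx
  set D : ℝ := 1 / (2*Real.pi*Real.sqrt m) with hDdef
  have hD : 0 < D := by rw [hDdef]; positivity
  have hTle : ∀ k, T k ≤ (lam*Δτ)^k / (k.factorial : ℝ) * D := by
    intro k
    exact mertonTerm_le lam Δτ (-(r+lam)*Δτ) m _ _ _ _ _ _ _ _ k (hMk k)
      (by positivity) hm (by have := hdetlb k; linarith) hx hθ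
  have hSum2 : Summable (fun k : ℕ => (lam*Δτ)^k / (k.factorial : ℝ) * D) :=
    (Real.summable_pow_div_factorial (lam*Δτ)).mul_right D
  have hSumT : Summable T := Summable.of_nonneg_of_le hTnn hTle hSum2
  have hGdef : mertonGreen r lam σx σy ρ κx κy (jumpCov σtx σty ρh) μ Δτ z = ∑' k, T k := rfl
  have hGnn : 0 ≤ mertonGreen r lam σx σy ρ κx κy (jumpCov σtx σty ρh) μ Δτ z := by
    rw [hGdef]; exact tsum_nonneg hTnn
  have hexpsum : ∑' k : ℕ, (lam*Δτ)^k / (k.factorial : ℝ) = Real.exp (lam*Δτ) := by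
    rw [Real.exp_eq_exp_ℝ, NormedSpace.exp_eq_tsum_div]
  have hGle : mertonGreen r lam σx σy ρ κx κy (jumpCov σtx σty ρh) μ Δτ z ≤
      Real.exp (lam*Δτ) * D := by
    rw [hGdef]
    calc ∑' k, T k ≤ ∑' k : ℕ, (lam*Δτ)^k / (k.factorial : ℝ) * D :=
          Summable.tsum_le_tsum hTle hSumT hSum2
      _ = Real.exp (lam*Δτ) * D := by rw [tsum_mul_right, hexpsum]
  -- uniform bound on the scaled Green function
  have hxm : 0 ≤ C₁ * h * (C₂ * h) := by positivity
  have hexpx : Real.exp (lam*Δτ) ≤ Real.exp (lam*C₃) := by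
    apply Real.exp_le_exp.mpr; rw [hΔτdef]
    nlinarith [mul_le_mul_of_nonneg_left hh1.le (mul_nonneg hlam hC₃.le)]
  have hhS : h^2 / Real.sqrt m ≤ S := by
    rcases le_total (Δτ^2*d1) d2 with hab | hab
    · have hmm : m = Δτ^2*d1 := min_eq_left hab
      have hsq : Real.sqrt m = Δτ * Real.sqrt d1 := by
        rw [hmm, Real.sqrt_mul (sq_nonneg Δτ), Real.sqrt_sq hΔτ.le]
      rw [hsq, hΔτdef]
      have h1 : h^2 / (C₃ * h * Real.sqrt d1) = h / (C₃ * Real.sqrt d1) := by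
        field_simp
      rw [h1, hSdef]
      have h2 : 0 < 1/Real.sqrt d2 := by positivity
      have h3 : h / (C₃ * Real.sqrt d1) ≤ 1 / (C₃ * Real.sqrt d1) := by
        gcongr <;> linarith
      linarith
    · have hmm : m = d2 := min_eq_right hab
      rw [hmm, hSdef]
      have h3 : h^2 / Real.sqrt d2 ≤ 1 / Real.sqrt d2 := by
        gcongr <;> nlinarith
      have h4 : 0 < 1/(C₃*Real.sqrt d1) := by positivity
      linarith
  have hfinal : C₁ * h * (C₂ * h) *
      mertonGreen r lam σx σy ρ κx κy (jumpCov σtx σty ρh) μ Δτ z ≤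
      C₁*C₂*Real.exp (lam*C₃) * S / (2*Real.pi) := by
    calc C₁ * h * (C₂ * h) * mertonGreen r lam σx σy ρ κx κy (jumpCov σtx σty ρh) μ Δτ z
        ≤ C₁ * h * (C₂ * h) * (Real.exp (lam*Δτ) * D) :=
          mul_le_mul_of_nonneg_left hGle hxm
      _ = C₁*C₂/(2*Real.pi) * ((h^2 / Real.sqrt m) * Real.exp (lam*Δτ)) := by
          rw [hDdef]
          have hpi : (2:ℝ)*Real.pi ≠ 0 := by positivity
          field_simp
      _ ≤ C₁*C₂/(2*Real.pi) * (S * Real.exp (lam*C₃)) := by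
          have hq : (h^2 / Real.sqrt m) * Real.exp (lam*Δτ) ≤ S * Real.exp (lam*C₃) :=
            mul_le_mul hhS hexpx (Real.exp_pos _).le hS.le
          exact mul_le_mul_of_nonneg_left hq (by positivity)
      _ = C₁*C₂*Real.exp (lam*C₃) * S / (2*Real.pi) := by ring
  refine ⟨⟨mul_nonneg hxm hGnn, hfinal⟩, ?_⟩
  intro K
  have hPnn : 0 ≤ mertonGreenPartial r lam σx σy ρ κx κy (jumpCov σtx σty ρh) μ Δτ K z :=
    Finset.sum_nonneg fun k _ => hTnn k
  have hPle : mertonGreenPartial r lam σx σy ρ κx κy (jumpCov σtx σty ρh) μ Δτ K z ≤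
      mertonGreen r lam σx σy ρ κx κy (jumpCov σtx σty ρh) μ Δτ z := by
    rw [hGdef]
    exact Summable.sum_le_tsum (Finset.range (K+1)) (fun k _ => hTnn k) hSumT
  exact ⟨mul_nonneg hxm hPnn,
    le_trans (mul_le_mul_of_nonneg_left hPle hxm) hfinal⟩
end
end

section
/- Consider the explicit timestepping scheme for the localized American option problem: given Δx, Δy, Δτ > 0, T = MΔτ for an integer M ≥ 1, r ≥ 0, even integers N, J ≥ 4, index sets ℕ† = {−N,…,N}, 𝕁† = {−J,…,J}, interior sets ℕ = {−N/2+1,…,N/2−1}, 𝕁 = {−J/2+1,…,J/2−1}, bounded payoff values v̂_{n,j} ∈ ℝ, trapezoidal weights φ_{l,d} ≥ 0, nonnegative weights g_{p,q} ≥ 0, and a constant ε ≥ 0 such that Δx Δy Σ_{l∈ℕ†} Σ_{d∈𝕁†} φ_{l,d} g_{n−l,j−d} ≤ e^{εΔτ/T} for every (n,j) ∈ ℕ×𝕁. Define v⁰_{n,j} = v̂_{n,j} for all (n,j) ∈ ℕ†×𝕁†, and for m = 0,…,M−1: v^{m+1}_{n,j} = max( Δx Δy Σ_{l∈ℕ†}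 Σ_{d∈𝕁†} φ_{l,d} g_{n−l,j−d} v^m_{l,d} , v̂_{n,j} ) if (n,j) ∈ ℕ×𝕁, and v^{m+1}_{n,j} = v̂_{n,j} e^{−r(m+1)Δτ} if (n,j) ∈ (ℕ†×𝕁†)∖(ℕ×𝕁). Then the scheme is ℓ∞-stable: for every m = 0,…,M and every (n,j) ∈ ℕ†×𝕁†, |v^m_{n,j}| ≤ e^{m (Δτ/T) ε} · max_{(n',j') ∈ ℕ†×𝕁†} |v̂_{n',j'}|. -/
open scoped BigOperators

noncomputable section

/-- ℓ∞-stability of the explicit timestepping scheme: if the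
weighted quadrature sums satisfy `Δx Δy Σ φ_{l,d} g_{n−l,j−d} ≤ e^{εΔτ/T}` on the
interior set, then the scheme `v^{m+1} = max(quadrature of v^m, payoff)` (with
discounted-payoff boundary values) satisfies
`|v^m_{n,j}| ≤ e^{m(Δτ/T)ε} · max |v̂|` for all `0 ≤ m ≤ M` and all grid nodes. -/
theorem scheme_linfty_stability
    (Δx Δy Δτ T r ε : ℝ) (hΔx : 0 < Δx) (hΔy : 0 < Δy) (hΔτ : 0 < Δτ)
    (M : ℕ) (hM : 1 ≤ M) (hT : T = (M : ℝ) * Δτ) (hr : 0 ≤ r) (hε : 0 ≤ ε)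
    (N J : ℕ) (hN : 4 ≤ N) (hJ : 4 ≤ J) (hNeven : Even N) (hJeven : Even J)
    (vhat : ℤ → ℤ → ℝ)
    (φ : ℤ → ℤ → ℝ) (hφ : ∀ l d, 0 ≤ φ l d)
    (g : ℤ → ℤ → ℝ) (hg : ∀ p q, 0 ≤ g p q)
    (hsum : ∀ n j : ℤ,
      n ∈ Finset.Icc (-((N : ℤ) / 2) + 1) ((N : ℤ) / 2 - 1) →
      j ∈ Finset.Icc (-((J : ℤ) / 2) + 1) ((J : ℤ) / 2 - 1) →
      Δx * Δy *
          ∑ l ∈ Finset.Icc (-(N : ℤ)) (N : ℤ), ∑ d ∈ Finset.Icc (-(J : ℤ)) (J : ℤ),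
            φ l d * g (n - l) (j - d) ≤ Real.exp (ε * Δτ / T))
    (v : ℕ → ℤ → ℤ → ℝ)
    (hv0 : ∀ n j : ℤ, n ∈ Finset.Icc (-(N : ℤ)) (N : ℤ) → j ∈ Finset.Icc (-(J : ℤ)) (J : ℤ) →
      v 0 n j = vhat n j)
    (hvin : ∀ m < M, ∀ n j : ℤ,
      n ∈ Finset.Icc (-((N : ℤ) / 2) + 1) ((N : ℤ) / 2 - 1) →
      j ∈ Finset.Icc (-((J : ℤ) / 2) + 1) ((J : ℤ) / 2 - 1) →
      v (m + 1) n j =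
        max (Δx * Δy *
            ∑ l ∈ Finset.Icc (-(N : ℤ)) (N : ℤ), ∑ d ∈ Finset.Icc (-(J : ℤ)) (J : ℤ),
              φ l d * g (n - l) (j - d) * v m l d)
          (vhat n j))
    (hvout : ∀ m < M, ∀ n j : ℤ,
      n ∈ Finset.Icc (-(N : ℤ)) (N : ℤ) → j ∈ Finset.Icc (-(J : ℤ)) (J : ℤ) →
      ¬(n ∈ Finset.Icc (-((N : ℤ) / 2) + 1) ((N : ℤ) / 2 - 1) ∧
          j ∈ Finset.Icc (-((J : ℤ) / 2) + 1) ((J : ℤ) / 2 - 1)) →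
      v (m + 1) n j = vhat n j * Real.exp (-(r * (((m : ℝ) + 1) * Δτ)))) :
    ∀ m ≤ M, ∀ n j : ℤ,
      n ∈ Finset.Icc (-(N : ℤ)) (N : ℤ) → j ∈ Finset.Icc (-(J : ℤ)) (J : ℤ) →
      |v m n j| ≤ Real.exp ((m : ℝ) * (Δτ / T) * ε) *
        ((Finset.Icc (-(N : ℤ)) (N : ℤ) ×ˢ Finset.Icc (-(J : ℤ)) (J : ℤ)).sup'
          (Finset.Nonempty.product
            (Finset.nonempty_Icc.mpr (neg_le_self (Int.natCast_nonneg N)))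
            (Finset.nonempty_Icc.mpr (neg_le_self (Int.natCast_nonneg J))))
          fun p => |vhat p.1 p.2|) := by

  set K := ((Finset.Icc (-(N : ℤ)) (N : ℤ) ×ˢ Finset.Icc (-(J : ℤ)) (J : ℤ)).sup'
      (Finset.Nonempty.product
        (Finset.nonempty_Icc.mpr (neg_le_self (Int.natCast_nonneg N)))
        (Finset.nonempty_Icc.mpr (neg_le_self (Int.natCast_nonneg J))))
      fun p => |vhat p.1 p.2|) with hKdef
  have hKle : ∀ n j : ℤ, n ∈ Finset.Icc (-(N : ℤ)) (N : ℤ) →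
      j ∈ Finset.Icc (-(J : ℤ)) (J : ℤ) → |vhat n j| ≤ K := by
    intro n j hn hj
    exact Finset.le_sup' (f := fun p : ℤ × ℤ => |vhat p.1 p.2|)
      (Finset.mk_mem_product hn hj)
  have hK0 : 0 ≤ K :=
    le_trans (abs_nonneg _)
      (hKle 0 0 (by simp) (by simp))
  have hT0 : 0 < T := by
    rw [hT]
    have : (1 : ℝ) ≤ (M : ℝ) := by exact_mod_cast hM
    nlinarith
  have hc : 0 ≤ Δτ / T := le_of_lt (div_pos hΔτ hT0)
  have hsub : ∀ a : ℤ, ∀ K' : ℕ, a ∈ Finset.Icc (-((K' : ℤ) / 2) + 1) ((K' : ℤ) / 2 - 1) →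
      a ∈ Finset.Icc (-(K' : ℤ)) (K' : ℤ) := by
    intro a K' ha
    simp only [Finset.mem_Icc] at ha ⊢
    constructor
    · have := Int.ediv_le_self 2 (Int.natCast_nonneg K')
      omega
    · have := Int.ediv_le_self 2 (Int.natCast_nonneg K')
      omega
  intro m
  induction m with
  | zero =>
    intro _ n j hn hj
    rw [hv0 n j hn hj]
    simp only [Nat.cast_zero, zero_mul, Real.exp_zero, one_mul]
    exact hKle n j hn hj
  | succ m ih =>
    intro hm n j hn hj
    have hmM : m < M := Nat.lt_of_succ_le hm
    have ihm := ih (le_of_lt hmM)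
    set B := Real.exp ((m : ℝ) * (Δτ / T) * ε) * K with hBdef
    have hB0 : 0 ≤ B := mul_nonneg (Real.exp_nonneg _) hK0
    have hexpB : Real.exp (ε * Δτ / T) * B =
        Real.exp (((m : ℝ) + 1) * (Δτ / T) * ε) * K := by
      rw [hBdef, ← mul_assoc, ← Real.exp_add]
      ring_nf
    have hgoal_exp : Real.exp (((m + 1 : ℕ) : ℝ) * (Δτ / T) * ε) =
        Real.exp (((m : ℝ) + 1) * (Δτ / T) * ε) := by
      push_cast; ring_nf
    have hKleB : K ≤ Real.exp (((m : ℝ) + 1) * (Δτ / T) * ε) * K := by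
      have h1 : (1 : ℝ) ≤ Real.exp (((m : ℝ) + 1) * (Δτ / T) * ε) := by
        apply Real.one_le_exp
        positivity
      nlinarith
    by_cases hin : n ∈ Finset.Icc (-((N : ℤ) / 2) + 1) ((N : ℤ) / 2 - 1) ∧
        j ∈ Finset.Icc (-((J : ℤ) / 2) + 1) ((J : ℤ) / 2 - 1)
    · -- interior
      rw [hvin m hmM n j hin.1 hin.2]
      have hSbound : |Δx * Δy *
          ∑ l ∈ Finset.Icc (-(N : ℤ)) (N : ℤ), ∑ d ∈ Finset.Icc (-(J : ℤ)) (J : ℤ),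
            φ l d * g (n - l) (j - d) * v m l d| ≤ Real.exp (ε * Δτ / T) * B := by
        have habs : |∑ l ∈ Finset.Icc (-(N : ℤ)) (N : ℤ),
            ∑ d ∈ Finset.Icc (-(J : ℤ)) (J : ℤ),
              φ l d * g (n - l) (j - d) * v m l d| ≤
            ∑ l ∈ Finset.Icc (-(N : ℤ)) (N : ℤ),
            ∑ d ∈ Finset.Icc (-(J : ℤ)) (J : ℤ),
              φ l d * g (n - l) (j - d) * B := by
          refine le_trans (Finset.abs_sum_le_sum_abs _ _) (Finset.sum_le_sum ?_)
          intro l hl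
          refine le_trans (Finset.abs_sum_le_sum_abs _ _) (Finset.sum_le_sum ?_)
          intro d hd
          rw [abs_mul, abs_of_nonneg (mul_nonneg (hφ l d) (hg _ _))]
          exact mul_le_mul_of_nonneg_left (ihm l d hl hd)
            (mul_nonneg (hφ l d) (hg _ _))
        have hfac : ∑ l ∈ Finset.Icc (-(N : ℤ)) (N : ℤ),
            ∑ d ∈ Finset.Icc (-(J : ℤ)) (J : ℤ),
              φ l d * g (n - l) (j - d) * B =
            (∑ l ∈ Finset.Icc (-(N : ℤ)) (N : ℤ),
            ∑ d ∈ Finset.Icc (-(J : ℤ)) (J : ℤ),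
              φ l d * g (n - l) (j - d)) * B := by
          rw [Finset.sum_mul]
          exact Finset.sum_congr rfl fun l _ => (Finset.sum_mul _ _ _).symm
        rw [abs_mul, abs_of_nonneg (le_of_lt (mul_pos hΔx hΔy)), mul_assoc] at *
        calc Δx * (Δy * |∑ l ∈ Finset.Icc (-(N : ℤ)) (N : ℤ),
              ∑ d ∈ Finset.Icc (-(J : ℤ)) (J : ℤ),
                φ l d * g (n - l) (j - d) * v m l d|)
            ≤ Δx * (Δy * ((∑ l ∈ Finset.Icc (-(N : ℤ)) (N : ℤ),
              ∑ d ∈ Finset.Icc (-(J : ℤ)) (J : ℤ),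
                φ l d * g (n - l) (j - d)) * B)) := by
              exact mul_le_mul_of_nonneg_left
                (mul_le_mul_of_nonneg_left (le_trans habs (le_of_eq hfac)) hΔy.le) hΔx.le
          _ = (Δx * Δy * (∑ l ∈ Finset.Icc (-(N : ℤ)) (N : ℤ),
              ∑ d ∈ Finset.Icc (-(J : ℤ)) (J : ℤ),
                φ l d * g (n - l) (j - d))) * B := by ring
          _ ≤ Real.exp (ε * Δτ / T) * B :=
              mul_le_mul_of_nonneg_right (hsum n j hin.1 hin.2) hB0
      rw [hgoal_exp]
      refine abs_max_le_max_abs_abs.trans (max_le ?_ ?_)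
      · exact le_trans hSbound (le_of_eq hexpB)
      · exact le_trans (hKle n j hn hj) hKleB
    · -- boundary
      rw [hvout m hmM n j hn hj hin, hgoal_exp]
      rw [abs_mul, abs_of_nonneg (Real.exp_nonneg _)]
      have h1 : Real.exp (-(r * (((m : ℝ) + 1) * Δτ))) ≤ 1 := by
        apply Real.exp_le_one_iff.mpr
        have : 0 ≤ r * (((m : ℝ) + 1) * Δτ) := by positivity
        linarith
      calc |vhat n j| * Real.exp (-(r * (((m : ℝ) + 1) * Δτ)))
          ≤ |vhat n j| * 1 := mul_le_mul_of_nonneg_left h1 (abs_nonneg _)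
        _ = |vhat n j| := mul_one _
        _ ≤ K := hKle n j hn hj
        _ ≤ _ := hKleB
end
end

section
/- The timestepping operator of the scheme is monotone: let Δτ > 0, let v, v̂ ∈ ℝ, let I be a finite index set, and let γ_i ≥ 0 for i ∈ I. For families (w_i)_{i∈I} and (z_i)_{i∈I} of real numbers with w_i ≥ z_i for every i ∈ I, it holds that min( (v − Σ_{i∈I} γ_i w_i)/Δτ , v − v̂ ) ≤ min( (v − Σ_{i∈I} γ_i z_i)/Δτ , v − v̂ ). Consequently, the scheme operator H^{m+1}_{n,j}(h, v^{m+1}_{n,j}, {w^m_{l,d}}), defined on interior nodes by C^{m+1}_{n,j} = min( (v^{m+1}_{n,j} − Δx Δy Σ_{l,d} φ_{l,d} g_{n−l,j−d} w^m_{l,d})/Δτ , v^{m+1}_{n,j} − v̂_{n,j} ) with nonnegative weights φ_{l,d} g_{n−l,j−d} ≥ 0, and on boundary/initial nodes by expressions independent of {w^m_{l,d}}, satisfies H^{m+1}_{n,j}(h, v, {w}) ≤ H^{m+1}_{n,j}(h, v, {z}) whenever w ≥ z componentwise. -/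
open scoped BigOperators

/-- monotonicity of the timestepping operator: for nonnegative
weights `γ_i` and families `w ≥ z` componentwise,
`min((v − Σ γ_i w_i)/Δτ, v − v̂) ≤ min((v − Σ γ_i z_i)/Δτ, v − v̂)`; consequently the
case-wise scheme operator (equal to this `min` on interior nodes, and independent of
`{w}` on boundary/initial nodes) is monotone. -/
theorem scheme_operator_monotone
    (Δτ : ℝ) (hΔτ : 0 < Δτ) (v vhat : ℝ)
    (I : Type*) [Fintype I]
    (γ : I → ℝ) (hγ : ∀ i, 0 ≤ γ i)
    (w z : I → ℝ) (hwz : ∀ i, z i ≤ w i) :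
    (min ((v - ∑ i, γ i * w i) / Δτ) (v - vhat) ≤
        min ((v - ∑ i, γ i * z i) / Δτ) (v - vhat)) ∧
      ∀ (interior : Prop) [Decidable interior] (b : ℝ),
        (if interior then min ((v - ∑ i, γ i * w i) / Δτ) (v - vhat) else b) ≤
          (if interior then min ((v - ∑ i, γ i * z i) / Δτ) (v - vhat) else b) := by
  have hsum : ∑ i, γ i * z i ≤ ∑ i, γ i * w i :=
    Finset.sum_le_sum fun i _ => mul_le_mul_of_nonneg_left (hwz i) (hγ i)
  have hmin : min ((v - ∑ i, γ i * w i) / Δτ) (v - vhat) ≤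
      min ((v - ∑ i, γ i * z i) / Δτ) (v - vhat) :=
    min_le_min (by gcongr) le_rfl
  refine ⟨hmin, fun interior _ b => ?_⟩
  split <;> simp [hmin]
end
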